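/- If the correlation property holds with parameter a ≠ 0 and slack ε, i.e., |u_i − a·v_i| ≤ ε for all i = 1,…,N (where u_i, v_i are probit-transformed ID and OOD accuracies), and the sample standard deviation σ_v of v is positive, then the sample Pearson correlation satisfies |corr(u, v)| ≥ 1 − 2ε·√N/(|a|·||v̄||), hence corr(u,v) → sign-definite as ε → 0 with σ_v bounded below. -/

import Mathlib

noncomputable def center {n : ℕ} (v : Fin n → ℝ) : Fin n → ℝ :=
  fun i => v i - (∑ j, v j) / n

noncomputable def vnorm {n : ℕ} (v : Fin n → ℝ) : ℝ :=
  Real.sqrt (∑ i, (v i) ^ 2)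

noncomputable def pcorr {n : ℕ} (x y : Fin n → ℝ) : ℝ :=
  (∑ i, center x i * center y i) / (vnorm (center x) * vnorm (center y))

/-!
Centring is linear and does not increase the Euclidean norm, so the centred vectors satisfy
`center u = a • center v + f` with `‖f‖ ≤ ε √N`. For `x = a • y + f` with `‖f‖ ≤ t`,
Cauchy–Schwarz gives `|⟪x, y⟫| ≥ (X - t) ‖y‖` and `‖x‖ ≤ X + t`, where `X = |a| ‖y‖`, so the
cosine of the angle between `x` and `y` is at least `(X - t) / (X + t) ≥ 1 - 2 t / X`.
-/

open RealInnerProductSpace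

theorem one_sub_two_mul_div_le_abs_real_inner_div_norm_mul_norm {E : Type*}
    [NormedAddCommGroup E] [InnerProductSpace ℝ E] {x y : E} {a t : ℝ} (ha : a ≠ 0)
    (hy : y ≠ 0) (hxy : ‖x - a • y‖ ≤ t) :
    1 - 2 * t / (|a| * ‖y‖) ≤ |⟪x, y⟫| / (‖x‖ * ‖y‖) := by
  set X := |a| * ‖y‖
  have hy0 : 0 < ‖y‖ := norm_pos_iff.mpr hy
  have hX : 0 < X := mul_pos (abs_pos.mpr ha) hy0
  have ht : 0 ≤ t := (norm_nonneg _).trans hxy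
  have hinner : (X - t) * ‖y‖ ≤ |⟪x, y⟫| := by
    have hdev : |⟪x, y⟫ - a * ‖y‖ ^ 2| ≤ t * ‖y‖ := by
      rw [← real_inner_self_eq_norm_sq, ← real_inner_smul_left, ← inner_sub_left]
      exact (abs_real_inner_le_norm _ _).trans (by gcongr)
    have := abs_sub_abs_le_abs_sub (a * ‖y‖ ^ 2) ⟪x, y⟫
    rw [abs_sub_comm, abs_mul, abs_of_nonneg (sq_nonneg ‖y‖)] at this
    linarith
  have hnorm : ‖x‖ ≤ X + t := calc
    ‖x‖ = ‖a • y + (x - a • y)‖ := by rw [add_sub_cancel]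
    _ ≤ X + t := (norm_add_le _ _).trans (by rw [norm_smul, Real.norm_eq_abs]; gcongr)
  rcases lt_or_ge t X with htX | hXt
  · have hx : 0 < ‖x‖ := by
      nlinarith [abs_real_inner_le_norm x y]
    calc 1 - 2 * t / X ≤ (X - t) / (X + t) := by
          rw [show (X - t) / (X + t) = 1 - 2 * t / (X + t) by field_simp; ring]
          gcongr
          linarith
      _ = (X - t) * ‖y‖ / ((X + t) * ‖y‖) := (mul_div_mul_right _ _ hy0.ne').symm
      _ ≤ |⟪x, y⟫| / (‖x‖ * ‖y‖) := by gcongr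
  · calc 1 - 2 * t / X ≤ 0 := by
          rw [sub_nonpos, le_div_iff₀ hX]; linarith
      _ ≤ |⟪x, y⟫| / (‖x‖ * ‖y‖) := by positivity

section
variable {n : ℕ}

theorem vnorm_eq_norm_toLp (f : Fin n → ℝ) : vnorm f = ‖WithLp.toLp 2 f‖ := by
  simp [vnorm, EuclideanSpace.norm_eq]

theorem pcorr_eq_real_inner_div (x y : Fin n → ℝ) :
    pcorr x y = ⟪WithLp.toLp 2 (center x), WithLp.toLp 2 (center y)⟫ /
      (‖WithLp.toLp 2 (center x)‖ * ‖WithLp.toLp 2 (center y)‖) := by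
  simp [pcorr, vnorm_eq_norm_toLp, EuclideanSpace.inner_toLp_toLp, dotProduct, mul_comm]

theorem center_sub (u v : Fin n → ℝ) : center (u - v) = center u - center v := by
  funext i
  simp only [center, Pi.sub_apply, Finset.sum_sub_distrib]
  ring

theorem center_smul (a : ℝ) (v : Fin n → ℝ) : center (a • v) = a • center v := by
  funext i
  simp only [center, Pi.smul_apply, smul_eq_mul, ← Finset.mul_sum]
  ring

theorem sum_center_sq (e : Fin n → ℝ) :
    ∑ i, center e i ^ 2 = ∑ i, e i ^ 2 - (∑ i, e i) ^ 2 / n := by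
  simp only [center, sub_sq, Finset.sum_add_distrib, Finset.sum_sub_distrib, ← Finset.sum_mul,
    ← Finset.mul_sum, Finset.sum_const, Finset.card_univ, Fintype.card_fin, nsmul_eq_mul]
  rcases eq_or_ne n 0 with rfl | hn
  · simp
  · field_simp
    ring

theorem vnorm_center_le (e : Fin n → ℝ) : vnorm (center e) ≤ vnorm e := by
  refine Real.sqrt_le_sqrt ?_
  rw [sum_center_sq]
  linarith [div_nonneg (sq_nonneg (∑ i, e i)) (Nat.cast_nonneg n)]

theorem vnorm_le_mul_sqrt {e : Fin n → ℝ} {ε : ℝ} (he : ∀ i, |e i| ≤ ε) :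
    vnorm e ≤ ε * √n := by
  rcases Nat.eq_zero_or_pos n with rfl | hn
  · simp [vnorm]
  have hε : 0 ≤ ε := (abs_nonneg _).trans (he ⟨0, hn⟩)
  calc vnorm e ≤ √(∑ _i : Fin n, ε ^ 2) :=
        Real.sqrt_le_sqrt <| Finset.sum_le_sum fun i _ => sq_le_sq.mpr ((he i).trans (le_abs_self ε))
    _ = ε * √n := by simp [Real.sqrt_sq hε, mul_comm]

end

theorem correlation_property_implies_strong_correlation {N : ℕ}
    (u v : Fin N → ℝ) (a ε : ℝ) (ha : a ≠ 0)
    (hprop : ∀ i, |u i - a * v i| ≤ ε)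
    (hv : 0 < vnorm (center v)) :
    1 - 2 * ε * Real.sqrt N / (|a| * vnorm (center v)) ≤ |pcorr u v| := by
  rw [vnorm_eq_norm_toLp] at hv ⊢
  have hdev : ‖WithLp.toLp 2 (center u) - a • WithLp.toLp 2 (center v)‖ ≤ ε * √N := by
    rw [← WithLp.toLp_smul, ← WithLp.toLp_sub, ← vnorm_eq_norm_toLp, ← center_smul,
      ← center_sub]
    exact (vnorm_center_le _).trans (vnorm_le_mul_sqrt hprop)
  rw [pcorr_eq_real_inner_div, abs_div, abs_mul, abs_norm, abs_norm, mul_assoc]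
  exact one_sub_two_mul_div_le_abs_real_inner_div_norm_mul_norm ha (norm_pos_iff.mp hv) hdev
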